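/- The number of Callan sequences of size k × n equals the poly-Bernoulli number B_n^{(-k)} = ∑_{m=0}^{min(n,k)} (m!)^2 S(n+1,m+1) S(k+1,m+1), where S denotes Stirling numbers of the second kind. -/

import Mathlib

open Finset

/-- Stirling numbers of the second kind. -/
def stirling2 : ℕ → ℕ → ℕ
  | 0, 0 => 1
  | 0, _ + 1 => 0
  | _ + 1, 0 => 0
  | n + 1, j + 1 => (j + 1) * stirling2 n (j + 1) + stirling2 n j

/-- Genocchi numbers, via `G n = 2 (1 - 2^n) B n`. -/
def genocchi (n : ℕ) : ℚ := 2 * (1 - 2 ^ n) * bernoulli n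
/-- Blue base set for a `k × n` Callan sequence: `{1, …, k} ∪ {*}`. -/
abbrev Blue (k : ℕ) := Fin k ⊕ Unit

/-- Red base set for a `k × n` Callan sequence: `{1, …, n} ∪ {*}`. -/
abbrev Red (n : ℕ) := Fin n ⊕ Unit

/-- A Callan pair: a blue block together with a red block. -/
abbrev CPair (k n : ℕ) := Finset (Blue k) × Finset (Red n)

/-- A Callan sequence of size `k × n`: a sequence of Callan pairs whose blue (resp. red)
blocks form an ordered partition of the blue (resp. red) base set into nonempty blocks,
with both starred elements in the last (extra) pair. -/
structure CallanSeq (k n : ℕ) where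
  pairs : List (CPair k n)
  ne : pairs ≠ []
  blue_nonempty : ∀ p ∈ pairs, p.1.Nonempty
  red_nonempty : ∀ p ∈ pairs, p.2.Nonempty
  blue_partition : ∀ b : Blue k, ∃! i : Fin pairs.length, b ∈ (pairs.get i).1
  red_partition : ∀ r : Red n, ∃! i : Fin pairs.length, r ∈ (pairs.get i).2
  star_blue : (Sum.inr () : Blue k) ∈ (pairs.getLast ne).1
  star_red : (Sum.inr () : Red n) ∈ (pairs.getLast ne).2

/-- A barred Callan sequence: a Callan sequence with one bar inserted at any position
except the very end, i.e. immediately before one of the pairs. -/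
def BarredCallan (k n : ℕ) := Σ σ : CallanSeq k n, Fin σ.pairs.length

/-
Recording, for every element, the index of the pair whose block contains it turns a Callan
sequence with `m + 1` pairs into two surjections `{1, …, k, *} → Fin (m + 1)` and
`{1, …, n, *} → Fin (m + 1)` that both send `*` to the last index, and conversely the fibres of
two such surjections are the blocks of a Callan sequence. Surjections from an `N`-set onto a
`j`-set number `j! S(N, j)` (split on the value of the first element: either the rest is still
surjective, or it is surjective onto the complement of that value), and transpositions of the
target permute them freely over the value at `*`, so exactly `(j - 1)! S(N, j)` of them send `*`
to the last index. Since `m + 1` cannot exceed `k + 1` or `n + 1`, summing over `m` gives the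
formula.
-/

open Function

section Surjections

variable {α β : Type*}

theorem Set.compl_singleton_subset_iff {b : β} {s : Set β} :
    {b}ᶜ ⊆ s ↔ s = univ ∨ s = {b}ᶜ := by
  constructor
  · intro h
    by_cases hb : b ∈ s
    · exact .inl (eq_univ_of_forall fun y => by by_cases hy : y = b <;> aesop)
    · exact .inr (h.antisymm' fun y hy hyb => hb (hyb ▸ hy))
  · rintro (h | h) <;> simp [h]

theorem Fin.surjective_cons_iff {N : ℕ} {b : β} {g : Fin N → β} :
    Surjective (Fin.cons b g : Fin (N + 1) → β) ↔ Surjective g ∨ Set.range g = {b}ᶜ := by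
  rw [← Set.range_eq_univ, ← Set.range_eq_univ, Fin.range_cons, Set.insert_eq, Set.union_comm,
    ← Set.compl_subset_iff_union, Set.compl_subset_comm, Set.compl_singleton_subset_iff]

def rangeEqEquivSurjective (s : Set β) :
    {g : α → β // Set.range g = s} ≃ {h : α → s // Surjective h} where
  toFun g := ⟨Set.codRestrict g.1 s fun a => g.2.subset (Set.mem_range_self a), fun y => by
    obtain ⟨a, ha⟩ : y.1 ∈ Set.range g.1 := g.2.symm.subset y.2
    exact ⟨a, Subtype.ext ha⟩⟩
  invFun h := ⟨Subtype.val ∘ h.1, by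
    rw [Set.range_comp, h.2.range_eq, Set.image_univ, Subtype.range_coe]⟩
  left_inv _ := rfl
  right_inv _ := rfl

theorem Nat.card_surjective_cons [Finite β] (N : ℕ) (b : β) :
    Nat.card {g : Fin N → β // Surjective (Fin.cons b g : Fin (N + 1) → β)}
      = Nat.card {g : Fin N → β // Surjective g}
        + Nat.card {h : Fin N → ({b}ᶜ : Set β) // Surjective h} := by
  classical
  have hdisj : Disjoint (fun g : Fin N → β => Surjective g) (fun g => Set.range g = {b}ᶜ) :=
    fun p hs hr g hpg => by simpa [hr g hpg] using (hs g hpg).range_eq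
  rw [Nat.card_congr (Equiv.subtypeEquivRight fun g => Fin.surjective_cons_iff),
    Nat.card_congr (subtypeOrEquiv _ _ hdisj), Nat.card_sum,
    Nat.card_congr (rangeEqEquivSurjective _)]

theorem Nat.card_surjective_fin (N : ℕ) (β : Type*) [Finite β] :
    Nat.card {f : Fin N → β // Surjective f}
      = (Nat.card β).factorial * stirling2 N (Nat.card β) := by
  induction N generalizing β with
  | zero =>
    rcases isEmpty_or_nonempty β with hβ | ⟨⟨b⟩⟩
    · have : Unique {f : Fin 0 → β // Surjective f} :=
        ⟨⟨⟨finZeroElim, isEmptyElim⟩⟩, fun f => Subtype.ext (funext finZeroElim)⟩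
      simp [stirling2]
    · have : IsEmpty {f : Fin 0 → β // Surjective f} := ⟨fun f => (f.2 b).elim finZeroElim⟩
      obtain ⟨c, hc⟩ :=
        Nat.exists_eq_add_one_of_ne_zero (Nat.card_ne_zero.2 ⟨⟨b⟩, ‹_›⟩)
      simp [hc, stirling2]
  | succ N ih =>
    cases nonempty_fintype β
    have hcompl (b : β) : Nat.card ({b}ᶜ : Set β) = Nat.card β - 1 := by
      rw [Nat.card_coe_set_eq, Set.ncard_compl, Set.ncard_singleton]
    calc _ = Nat.card
          (Σ b : β, {g : Fin N → β // Surjective (Fin.cons b g : Fin (N + 1) → β)}) :=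
          Nat.card_congr <| ((Fin.consEquiv fun _ => β).symm.subtypeEquiv fun f => by
            simp [Fin.consEquiv]).trans (Equiv.subtypeProdEquivSigmaSubtype fun b g =>
              Surjective (Fin.cons b g : Fin (N + 1) → β))
      _ = Nat.card β * ((Nat.card β).factorial * stirling2 N (Nat.card β)
            + (Nat.card β - 1).factorial * stirling2 N (Nat.card β - 1)) := by
        simp only [Nat.card_sigma, Nat.card_surjective_cons, ih, hcompl, Finset.sum_const,
          Finset.card_univ, smul_eq_mul, Nat.card_eq_fintype_card]
      _ = _ := by
        rcases Nat.card β with _ | c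
        · simp [stirling2]
        · simp only [Nat.add_sub_cancel, stirling2, Nat.factorial_succ]
          ring

theorem Nat.card_surjective (α β : Type*) [Finite α] [Finite β] :
    Nat.card {f : α → β // Surjective f}
      = (Nat.card β).factorial * stirling2 (Nat.card α) (Nat.card β) := by
  rw [← Nat.card_surjective_fin]
  exact Nat.card_congr <| (Equiv.arrowCongr (Finite.equivFin α) (Equiv.refl β)).subtypeEquiv
    fun f => ((Finite.equivFin α).symm.surjective_comp f).symm

def surjectiveApplyEqProdEquiv [DecidableEq β] (a : α) (b : β) :
    {f : α → β // Surjective f ∧ f a = b} × β ≃ {f : α → β // Surjective f} where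
  toFun p := ⟨Equiv.swap b p.2 ∘ p.1.1, (Equiv.swap _ _).surjective.comp p.1.2.1⟩
  invFun f :=
    (⟨Equiv.swap b (f.1 a) ∘ f.1, (Equiv.swap _ _).surjective.comp f.2, by simp⟩, f.1 a)
  left_inv := by
    rintro ⟨⟨f, hf, rfl⟩, c⟩
    ext x <;> simp [Equiv.swap_apply_self]
  right_inv f := by
    ext x
    simp [Equiv.swap_apply_self]

theorem Nat.card_surjective_apply_eq [Finite α] [Finite β] (a : α) (b : β) :
    Nat.card {f : α → β // Surjective f ∧ f a = b}
      = (Nat.card β - 1).factorial * stirling2 (Nat.card α) (Nat.card β) := by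
  classical
  have h := Nat.card_congr (surjectiveApplyEqProdEquiv a b)
  rw [Nat.card_prod, Nat.card_surjective] at h
  obtain ⟨c, hc⟩ := Nat.exists_eq_add_one_of_ne_zero (Nat.card_ne_zero.2 ⟨⟨b⟩, ‹_›⟩)
  rw [hc, Nat.factorial_succ] at h
  rw [hc, Nat.add_sub_cancel]
  exact Nat.eq_of_mul_eq_mul_right c.succ_pos (by linarith)

end Surjections

section BlockIndex

variable {α : Type*} {L : ℕ} {B : Fin L → Finset α}

noncomputable def blockIndex (h : ∀ a, ∃! i, a ∈ B i) (a : α) : Fin L := (h a).choose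

theorem blockIndex_eq_iff (h : ∀ a, ∃! i, a ∈ B i) {a : α} {i : Fin L} :
    blockIndex h a = i ↔ a ∈ B i :=
  ⟨fun hi => hi ▸ (h a).choose_spec.1, fun hi => ((h a).choose_spec.2 i hi).symm⟩

theorem blockIndex_surjective (h : ∀ a, ∃! i, a ∈ B i) (hne : ∀ i, (B i).Nonempty) :
    Surjective (blockIndex h) :=
  fun i => (hne i).imp fun _ => (blockIndex_eq_iff h).2

end BlockIndex

/-- An ordered set partition of `{1, …, k, *}` into `m + 1` nonempty blocks with `*` in the last
one, encoded by the map sending each element to the index of its block. -/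
abbrev StarredPartition (k m : ℕ) :=
  {f : Fin k ⊕ Unit → Fin (m + 1) // Surjective f ∧ f (.inr ()) = Fin.last m}

namespace CallanSeq

variable {k n m : ℕ}

attribute [ext] CallanSeq

noncomputable def blueIndex (σ : CallanSeq k n) : Blue k → Fin σ.pairs.length :=
  blockIndex σ.blue_partition

noncomputable def redIndex (σ : CallanSeq k n) : Red n → Fin σ.pairs.length :=
  blockIndex σ.red_partition

theorem length_pos (σ : CallanSeq k n) : 0 < σ.pairs.length :=
  List.length_pos_iff.2 σ.ne

theorem blueIndex_surjective (σ : CallanSeq k n) : Surjective σ.blueIndex :=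
  blockIndex_surjective _ fun _ => σ.blue_nonempty _ (List.get_mem _ _)

theorem redIndex_surjective (σ : CallanSeq k n) : Surjective σ.redIndex :=
  blockIndex_surjective _ fun _ => σ.red_nonempty _ (List.get_mem _ _)

theorem blueIndex_star (σ : CallanSeq k n) :
    σ.blueIndex (.inr ()) = ⟨σ.pairs.length - 1, Nat.sub_one_lt σ.length_pos.ne'⟩ :=
  (blockIndex_eq_iff _).2 (by simpa [List.getLast_eq_getElem] using σ.star_blue)

theorem redIndex_star (σ : CallanSeq k n) :
    σ.redIndex (.inr ()) = ⟨σ.pairs.length - 1, Nat.sub_one_lt σ.length_pos.ne'⟩ :=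
  (blockIndex_eq_iff _).2 (by simpa [List.getLast_eq_getElem] using σ.star_red)

theorem length_le_min (σ : CallanSeq k n) : σ.pairs.length ≤ min n k + 1 := by
  have hk := Fintype.card_le_of_surjective _ σ.blueIndex_surjective
  have hn := Fintype.card_le_of_surjective _ σ.redIndex_surjective
  simp only [Fintype.card_sum, Fintype.card_fin, Fintype.card_unit] at hk hn
  omega

section OfPartitions

-- otherwise `simp` unfolds `List.ofFn` over `Fin (m + 1)` into a cons
attribute [-simp] List.ofFn_succ

def ofPartitions (f : StarredPartition k m) (g : StarredPartition n m) : CallanSeq k n where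
  pairs := List.ofFn fun i => (univ.filter (f.1 · = i), univ.filter (g.1 · = i))
  ne := by simp
  blue_nonempty := List.forall_mem_ofFn_iff.2 fun i => (f.2.1 i).imp fun b hb => by simp [hb]
  red_nonempty := List.forall_mem_ofFn_iff.2 fun i => (g.2.1 i).imp fun r hr => by simp [hr]
  blue_partition b := ⟨Fin.cast List.length_ofFn.symm (f.1 b), by simp, fun i hi => by
    simp only [List.get_ofFn, mem_filter, mem_univ, true_and] at hi
    simp [hi]⟩
  red_partition r := ⟨Fin.cast List.length_ofFn.symm (g.1 r), by simp, fun i hi => by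
    simp only [List.get_ofFn, mem_filter, mem_univ, true_and] at hi
    simp [hi]⟩
  star_blue := by simp [List.getLast_ofFn, f.2.2, Fin.ext_iff]
  star_red := by simp [List.getLast_ofFn, g.2.2, Fin.ext_iff]

theorem length_ofPartitions (f : StarredPartition k m) (g : StarredPartition n m) :
    (ofPartitions f g).pairs.length = m + 1 :=
  List.length_ofFn

end OfPartitions

theorem get_pairs_ofPartitions (f : StarredPartition k m) (g : StarredPartition n m)
    (i : Fin (ofPartitions f g).pairs.length) :
    (ofPartitions f g).pairs.get i = (univ.filter (f.1 · = Fin.cast (length_ofPartitions f g) i),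
      univ.filter (g.1 · = Fin.cast (length_ofPartitions f g) i)) :=
  List.get_ofFn _ i

theorem blueIndex_ofPartitions (f : StarredPartition k m) (g : StarredPartition n m) (b : Blue k) :
    (ofPartitions f g).blueIndex b = Fin.cast (length_ofPartitions f g).symm (f.1 b) :=
  (blockIndex_eq_iff _).2 (by rw [get_pairs_ofPartitions]; simp)

theorem redIndex_ofPartitions (f : StarredPartition k m) (g : StarredPartition n m) (r : Red n) :
    (ofPartitions f g).redIndex r = Fin.cast (length_ofPartitions f g).symm (g.1 r) :=
  (blockIndex_eq_iff _).2 (by rw [get_pairs_ofPartitions]; simp)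

noncomputable def bluePartition (σ : CallanSeq k n) (h : σ.pairs.length = m + 1) :
    StarredPartition k m :=
  ⟨Fin.cast h ∘ σ.blueIndex, (finCongr h).surjective.comp σ.blueIndex_surjective, by
    ext; simp [blueIndex_star, h]⟩

noncomputable def redPartition (σ : CallanSeq k n) (h : σ.pairs.length = m + 1) :
    StarredPartition n m :=
  ⟨Fin.cast h ∘ σ.redIndex, (finCongr h).surjective.comp σ.redIndex_surjective, by
    ext; simp [redIndex_star, h]⟩

theorem ofPartitions_bluePartition_redPartition (σ : CallanSeq k n)
    (h : σ.pairs.length = m + 1) : ofPartitions (σ.bluePartition h) (σ.redPartition h) = σ := by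
  ext1
  refine List.ext_get (by rw [length_ofPartitions, h]) fun i _ hi => ?_
  ext x <;> simp only [get_pairs_ofPartitions, bluePartition, redPartition, comp_apply,
    mem_filter, mem_univ, true_and] <;>
    exact Fin.ext_iff.trans <| (Fin.ext_iff (b := ⟨i, hi⟩)).symm.trans (blockIndex_eq_iff _)

noncomputable def equivStarredPartitions (m : ℕ) :
    {σ : CallanSeq k n // σ.pairs.length = m + 1} ≃ StarredPartition k m × StarredPartition n m
    where
  toFun σ := (σ.1.bluePartition σ.2, σ.1.redPartition σ.2)
  invFun p := ⟨ofPartitions p.1 p.2, length_ofPartitions p.1 p.2⟩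
  left_inv σ := Subtype.ext (ofPartitions_bluePartition_redPartition σ.1 σ.2)
  right_inv p := by
    ext x : 3 <;> simp [bluePartition, redPartition, blueIndex_ofPartitions, redIndex_ofPartitions]

instance (m : ℕ) : Finite {σ : CallanSeq k n // σ.pairs.length = m + 1} :=
  Finite.of_equiv _ (equivStarredPartitions m).symm

theorem card_length_eq_add_one (m : ℕ) :
    Nat.card {σ : CallanSeq k n // σ.pairs.length = m + 1}
      = (m.factorial * stirling2 (k + 1) (m + 1)) * (m.factorial * stirling2 (n + 1) (m + 1)) := by
  rw [Nat.card_congr (equivStarredPartitions m), Nat.card_prod, Nat.card_surjective_apply_eq,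
    Nat.card_surjective_apply_eq]
  simp

/-- The paper's `m`: the number of pairs before `(B*, R*)`. -/
def numUnstarredPairs (σ : CallanSeq k n) : Fin (min n k + 1) :=
  ⟨σ.pairs.length - 1, by have := σ.length_le_min; omega⟩

theorem numUnstarredPairs_eq_iff (σ : CallanSeq k n) {m : Fin (min n k + 1)} :
    σ.numUnstarredPairs = m ↔ σ.pairs.length = m + 1 := by
  have := σ.length_pos
  simp only [numUnstarredPairs, Fin.ext_iff]
  omega

end CallanSeq

/-- The number of Callan sequences of size `k × n` equals the poly-Bernoulli number
`B_n^{(-k)} = ∑_{m=0}^{min(n,k)} (m!)^2 S(n+1,m+1) S(k+1,m+1)`. -/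
theorem card_callanSeq (k n : ℕ) :
    Nat.card (CallanSeq k n)
      = ∑ m ∈ Finset.range (min n k + 1),
          (m.factorial) ^ 2 * stirling2 (n + 1) (m + 1) * stirling2 (k + 1) (m + 1) := by
  rw [← Nat.card_congr (Equiv.sigmaFiberEquiv CallanSeq.numUnstarredPairs),
    Nat.card_congr (Equiv.sigmaCongrRight fun m =>
      Equiv.subtypeEquivRight fun σ => σ.numUnstarredPairs_eq_iff),
    Nat.card_sigma, ← Fin.sum_univ_eq_sum_range]
  refine Finset.sum_congr rfl fun m _ => ?_
  rw [CallanSeq.card_length_eq_add_one]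
  ring
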